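/- arXiv:math/0607084 — 2 statements merged into one kernel-verified Lean document; each statement's English description precedes it below -/
import Mathlib

section
/- Let n be a positive integer and let V, A, B be real numbers with V > 0, A > V/n and 0 < B < 1. Define f(x) = A·(B − x)^{n−1}·(1 − x) − x. Then f(x) > 0 for every real x satisfying 0 ≤ x ≤ B^{n−1} / (n·(1 + V⁻¹)). -/
/-! Since `t ↦ t ^ m` is `m`-Lipschitz on `[-1, 1]`, `(B - x) ^ m (1 - x) ≥ B ^ m - (m + 1) x`.
With `m = n - 1` the bound on `x` makes the right-hand side at least `n x / V`, positive, and
`A > V / n` turns this into `A (B - x) ^ (n - 1) (1 - x) > x`. -/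

lemma pow_sub_sub_pow_le_mul {B x : ℝ} (m : ℕ) (hB : |B| ≤ 1) (hBx : |B - x| ≤ 1)
    (hx : 0 ≤ x) : B ^ m - (B - x) ^ m ≤ m * x := by
  have hmax : max |B| |B - x| ^ (m - 1) ≤ 1 := pow_le_one₀ (by positivity) (max_le hB hBx)
  calc B ^ m - (B - x) ^ m ≤ |B ^ m - (B - x) ^ m| := le_abs_self _
    _ ≤ |B - (B - x)| * m * max |B| |B - x| ^ (m - 1) := abs_pow_sub_pow_le ..
    _ ≤ |B - (B - x)| * m * 1 := by gcongr
    _ = m * x := by rw [sub_sub_cancel, abs_of_nonneg hx]; ring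

lemma pow_sub_succ_mul_le_sub_pow_mul_one_sub {B x : ℝ} (m : ℕ) (hB : |B| ≤ 1)
    (hBx : |B - x| ≤ 1) (hx : 0 ≤ x) : B ^ m - (m + 1) * x ≤ (B - x) ^ m * (1 - x) := by
  have hpow : (B - x) ^ m ≤ 1 :=
    (le_abs_self _).trans (by rw [abs_pow]; exact pow_le_one₀ (abs_nonneg _) hBx)
  have := pow_sub_sub_pow_le_mul m hB hBx hx
  nlinarith

/-- Lemma 1: for a positive integer `n` and reals `V > 0`, `A > V/n`,
`0 < B < 1`, the function `f(x) = A(B-x)^{n-1}(1-x) - x` is positive for all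
`0 ≤ x ≤ B^{n-1} / (n(1 + V⁻¹))`. -/
theorem statement9 (n : ℕ) (hn : 1 ≤ n) (V A B : ℝ)
    (hV : 0 < V) (hA : V / n < A) (hB0 : 0 < B) (hB1 : B < 1)
    (x : ℝ) (hx0 : 0 ≤ x) (hx1 : x ≤ B ^ (n - 1) / (n * (1 + V⁻¹))) :
    0 < A * (B - x) ^ (n - 1) * (1 - x) - x := by
  have hn0 : (1 : ℝ) ≤ n := by exact_mod_cast hn
  have hVinv : 0 < V⁻¹ := inv_pos.mpr hV
  have hBpow : 0 < B ^ (n - 1) := pow_pos hB0 _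
  have hxden : x * (n * (1 + V⁻¹)) ≤ B ^ (n - 1) := (le_div_iff₀ (by positivity)).mp hx1
  have hx_le_one : x ≤ 1 := by
    nlinarith [pow_le_one₀ hB0.le hB1.le (n := n - 1), mul_nonneg hx0 hVinv.le]
  set P := (B - x) ^ (n - 1) * (1 - x)
  have hlower : B ^ (n - 1) - n * x ≤ P := by
    have h := pow_sub_succ_mul_le_sub_pow_mul_one_sub (n - 1) (abs_le.mpr ⟨by linarith, hB1.le⟩)
      (abs_le.mpr ⟨by linarith, by linarith⟩) hx0
    rwa [Nat.cast_sub hn, Nat.cast_one, sub_add_cancel] at h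
  have hP_pos : 0 < P := by nlinarith [mul_nonneg hx0 hVinv.le]
  have hx_le : x ≤ V / n * P := by
    have h : n * x * V⁻¹ ≤ P := by nlinarith
    calc x = V / n * (n * x * V⁻¹) := by field_simp
      _ ≤ V / n * P := by gcongr
  have hAP : V / n * P < A * P := mul_lt_mul_of_pos_right hA hP_pos
  rw [mul_assoc]
  linarith
end

section
/- Let P = conv(S) ⊂ ℝ^N, where S is a finite set equal to the set of extreme points of P, and let d ≥ 2 be the dimension of the affine hull of P. Assign to each x ∈ S a mass ν_x > 0, and for a nonempty subset M' ⊆ S let c(M') = (Σ_{x∈M'} ν_x·x) / (Σ_{x∈M'} ν_x) be its center of mass. Let Δ ⊆ S be a d-element affinely independent subset such that conv(Δ) is contained in the relative boundary of P. Then conv(Δ ∪ {c(S)}) ∩ relint(P) ⊆ relint( conv(Δ ∪ {c(S \ Δ)}) ). -/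
/-!
A point `z` of `conv (Δ ∪ {c S})` lying in `relint P` is not in `conv Δ ⊆ ∂P`, so
`z = a • c S + b • y` with `a > 0` and `y ∈ conv Δ`. Splitting the mass of `S` into that of
`S \ Δ`, concentrated at `c (S \ Δ)`, and the masses at the points of `Δ` writes `z` as a
combination of `c (S \ Δ)` and the points of `Δ` with all weights positive; such a combination
lies in the relative interior of the convex hull of its points.
-/

open Set

noncomputable section

/-- The center of mass of a finite set of points of `ℝ^N` with masses `ν`. -/
def massCenter {N : ℕ} (ν : (Fin N → ℝ) → ℝ) (M : Finset (Fin N → ℝ)) : Fin N → ℝ :=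
  (∑ x ∈ M, ν x)⁻¹ • ∑ x ∈ M, ν x • x

section IntrinsicInterior

variable {E : Type*} [AddCommGroup E] [Module ℝ E] [TopologicalSpace E] [IsTopologicalAddGroup E]
  [ContinuousSMul ℝ E] [T2Space E] {ι : Type*} [Fintype ι]

/-- The weights are `w + g (a - z, 0)` for a linear right inverse `g` of
`c ↦ (∑ i, c i • p i, ∑ i, c i)` on its (finite-dimensional) range. -/
theorem exists_continuous_weights_on_affineSpan (p : ι → E) (w : ι → ℝ) (hw₁ : ∑ i, w i = 1) :
    ∃ F : affineSpan ℝ (range p) → ι → ℝ, Continuous F ∧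
      (∀ a, ∑ i, F a i = 1 ∧ ∑ i, F a i • p i = a) ∧
      ∀ a : affineSpan ℝ (range p), (a : E) = ∑ i, w i • p i → F a = w := by
  set z := ∑ i, w i • p i
  let L : (ι → ℝ) →ₗ[ℝ] E × ℝ :=
    (Fintype.linearCombination ℝ p).prod (Fintype.linearCombination ℝ fun _ => 1)
  have hL : ∀ c, L c = (∑ i, c i • p i, ∑ i, c i) := fun c => by
    simp [L, Fintype.linearCombination_apply]
  have hmem : ∀ a : affineSpan ℝ (range p), ((a : E) - z, (0 : ℝ)) ∈ LinearMap.range L := by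
    rintro ⟨a, ha⟩
    obtain ⟨v, hv₁, rfl⟩ := eq_affineCombination_of_mem_affineSpan_of_fintype ha
    refine ⟨v - w, ?_⟩
    simp [hL, Finset.affineCombination_eq_linear_combination _ _ _ hv₁, sub_smul, hv₁, hw₁, z]
  obtain ⟨g, hg⟩ := L.rangeRestrict.exists_rightInverse_of_surjective L.range_rangeRestrict
  have hLg : ∀ u, L (g u) = u := fun u => congrArg Subtype.val (LinearMap.congr_fun hg u)
  refine ⟨fun a => w + g ⟨((a : E) - z, 0), hmem a⟩, ?_, fun a => ?_, fun a ha => ?_⟩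
  · exact continuous_const.add <| g.continuous_of_finiteDimensional.comp <|
      ((continuous_subtype_val.sub continuous_const).prodMk continuous_const).subtype_mk _
  · have h : L (w + g ⟨((a : E) - z, 0), hmem a⟩) = ((a : E), 1) := by
      rw [map_add, hLg, hL]
      simp [z, hw₁]
    rw [hL, Prod.mk.injEq] at h
    exact ⟨h.2, h.1⟩
  · have h₀ : (⟨((a : E) - z, 0), hmem a⟩ : LinearMap.range L) = 0 := by
      ext <;> simp [ha]
    simp [h₀]

theorem sum_smul_mem_intrinsicInterior_convexHull (p : ι → E) {w : ι → ℝ} (hw : ∀ i, 0 < w i)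
    (hw₁ : ∑ i, w i = 1) :
    ∑ i, w i • p i ∈ intrinsicInterior ℝ (convexHull ℝ (range p)) := by
  obtain ⟨F, hFc, hF, hFw⟩ := exists_continuous_weights_on_affineSpan p w hw₁
  have hz : ∑ i, w i • p i ∈ convexHull ℝ (range p) :=
    (convex_convexHull ℝ _).sum_mem (fun i _ => (hw i).le) hw₁
      (fun i _ => subset_convexHull ℝ _ (mem_range_self i))
  let z : affineSpan ℝ (range p) := ⟨_, convexHull_subset_affineSpan _ hz⟩
  rw [mem_intrinsicInterior, affineSpan_convexHull]
  refine ⟨z, ?_, rfl⟩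
  let U := F ⁻¹' {c | ∀ i, 0 < c i}
  have hU : IsOpen U := by
    simp only [U, ofPred_forall]
    exact (isOpen_iInter_of_finite fun i => isOpen_lt continuous_const (continuous_apply i)).preimage
      hFc
  refine mem_interior.2 ⟨U, fun a ha => ?_, hU, by simpa [U, hFw z rfl] using hw⟩
  rw [mem_preimage, ← (hF a).2]
  exact (convex_convexHull ℝ _).sum_mem (fun i _ => (ha i).le) (hF a).1
    (fun i _ => subset_convexHull ℝ _ (mem_range_self i))

theorem smul_add_sum_smul_mem_intrinsicInterior_convexHull_insert (c : E) (s : Finset E)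
    {a : ℝ} {β : E → ℝ} (ha : 0 < a) (hβ : ∀ x ∈ s, 0 < β x) (h₁ : a + ∑ x ∈ s, β x = 1) :
    a • c + ∑ x ∈ s, β x • x ∈ intrinsicInterior ℝ (convexHull ℝ (insert c (s : Set E))) := by
  have hrange : range (fun i : Option s => i.elim c Subtype.val) = insert c (s : Set E) := by
    ext; simp [Option.exists, eq_comm]
  have := sum_smul_mem_intrinsicInterior_convexHull (fun i : Option s => i.elim c Subtype.val)
    (w := fun i => i.elim a (β ∘ Subtype.val)) (by rintro (_ | ⟨x, hx⟩); exacts [ha, hβ x hx])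
    (by simpa [Fintype.sum_option, Finset.sum_attach s β] using h₁)
  simpa [Fintype.sum_option, hrange, Finset.sum_attach s fun x => β x • x] using this

end IntrinsicInterior

section MassCenter

variable {N : ℕ} {ν : (Fin N → ℝ) → ℝ} {S Δ : Finset (Fin N → ℝ)}

theorem massCenter_eq_smul_add_sum (hΔS : Δ ⊆ S) (hSΔ : ∑ x ∈ S \ Δ, ν x ≠ 0) :
    massCenter ν S = ((∑ x ∈ S, ν x)⁻¹ * ∑ x ∈ S \ Δ, ν x) • massCenter ν (S \ Δ) +
      ∑ x ∈ Δ, ((∑ x ∈ S, ν x)⁻¹ * ν x) • x := by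
  simp only [massCenter, mul_smul, ← Finset.smul_sum, smul_inv_smul₀ hSΔ, ← smul_add,
    Finset.sum_sdiff hΔS]

theorem smul_massCenter_add_smul_mem_intrinsicInterior (hν : ∀ x ∈ S, 0 < ν x) (hΔS : Δ ⊆ S)
    (hSΔ : (S \ Δ).Nonempty) {y : Fin N → ℝ} (hy : y ∈ convexHull ℝ (Δ : Set (Fin N → ℝ)))
    {a b : ℝ} (ha : 0 < a) (hb : 0 ≤ b) (hab : a + b = 1) :
    a • massCenter ν S + b • y ∈
      intrinsicInterior ℝ (convexHull ℝ (insert (massCenter ν (S \ Δ)) (Δ : Set (Fin N → ℝ)))) := by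
  obtain ⟨g, hg, hg₁, rfl⟩ := Finset.mem_convexHull.1 hy
  have hm' : 0 < ∑ x ∈ S \ Δ, ν x :=
    Finset.sum_pos (fun x hx => hν x (Finset.mem_sdiff.1 hx).1) hSΔ
  set m' := ∑ x ∈ S \ Δ, ν x
  have hm : ∑ x ∈ S, ν x = m' + ∑ x ∈ Δ, ν x := (Finset.sum_sdiff hΔS).symm
  have hm₀ : 0 < m' + ∑ x ∈ Δ, ν x :=
    add_pos_of_pos_of_nonneg hm' (Finset.sum_nonneg fun x hx => (hν x (hΔS hx)).le)
  rw [massCenter_eq_smul_add_sum hΔS hm'.ne', Finset.centerMass_eq_of_sum_1 _ _ hg₁, hm]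
  convert smul_add_sum_smul_mem_intrinsicInterior_convexHull_insert (massCenter ν (S \ Δ)) Δ
    (a := a * ((m' + ∑ x ∈ Δ, ν x)⁻¹ * m'))
    (β := fun x => a * ((m' + ∑ x ∈ Δ, ν x)⁻¹ * ν x) + b * g x) 
    (mul_pos ha (mul_pos (inv_pos.2 hm₀) hm'))
    (fun x hx => add_pos_of_pos_of_nonneg (mul_pos ha (mul_pos (inv_pos.2 hm₀) (hν x (hΔS hx))))
      (mul_nonneg hb (hg x hx))) ?_ using 1
  · simp only [smul_add, Finset.smul_sum, smul_smul, add_smul, Finset.sum_add_distrib, id]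
    abel
  · rw [Finset.sum_add_distrib, ← Finset.mul_sum, ← Finset.mul_sum, ← Finset.mul_sum, hg₁]
    field_simp
    linear_combination (m' + ∑ x ∈ Δ, ν x) * hab

end MassCenter

theorem statement14_general (N : ℕ) (S : Finset (Fin N → ℝ))
    (P : Set (Fin N → ℝ)) (hP : P = convexHull ℝ (S : Set (Fin N → ℝ)))
    (d : ℕ) (hd2 : 2 ≤ d)
    (ν : (Fin N → ℝ) → ℝ) (hν : ∀ x ∈ S, 0 < ν x)
    (Δ : Finset (Fin N → ℝ)) (hΔS : Δ ⊆ S) (hΔcard : Δ.card = d)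
    (hΔbd : convexHull ℝ (Δ : Set (Fin N → ℝ)) ⊆ intrinsicFrontier ℝ P) :
    convexHull ℝ ((Δ : Set (Fin N → ℝ)) ∪ {massCenter ν S}) ∩ intrinsicInterior ℝ P ⊆
      intrinsicInterior ℝ
        (convexHull ℝ ((Δ : Set (Fin N → ℝ)) ∪ {massCenter ν (S \ Δ)})) := by
  rintro z ⟨hzc, hzP⟩
  have hzΔ : z ∉ convexHull ℝ (Δ : Set (Fin N → ℝ)) := fun h =>
    (intrinsicClosure_sdiff_intrinsicInterior (𝕜 := ℝ) P ▸ hΔbd h).2 hzP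
  have hSΔ : (S \ Δ).Nonempty := Finset.sdiff_nonempty.2 fun hSΔ =>
    hzΔ (convexHull_mono hSΔ (hP ▸ intrinsicInterior_subset hzP))
  have hΔ : (Δ : Set (Fin N → ℝ)).Nonempty := Finset.coe_nonempty.2 (Finset.card_pos.1 (by omega))
  rw [union_singleton, convexHull_insert hΔ, mem_convexJoin] at hzc
  obtain ⟨_, rfl, y, hy, a, b, ha, hb, hab, rfl⟩ := hzc
  have ha : 0 < a := ha.lt_of_ne fun ha₀ => hzΔ <| by
    rw [← ha₀, zero_add] at hab
    simpa [← ha₀, hab] using hy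
  rw [union_singleton]
  exact smul_massCenter_add_smul_mem_intrinsicInterior hν hΔS hSΔ hy ha hb hab

/-- with `P = conv S`, `S` the set of extreme points, `d ≥ 2` the
dimension of `P`, positive masses `ν`, and `Δ ⊆ S` a `d`-element affinely independent
subset with `conv Δ` in the relative boundary of `P`, one has
`conv(Δ ∪ {c(S)}) ∩ relint P ⊆ relint (conv(Δ ∪ {c(S \ Δ)}))`. -/
theorem statement14 (N : ℕ) (S : Finset (Fin N → ℝ))
    (P : Set (Fin N → ℝ)) (hP : P = convexHull ℝ (S : Set (Fin N → ℝ)))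
    (hext : (S : Set (Fin N → ℝ)) = Set.extremePoints ℝ P)
    (d : ℕ) (hd2 : 2 ≤ d)
    (hdim : Module.finrank ℝ (affineSpan ℝ P).direction = d)
    (ν : (Fin N → ℝ) → ℝ) (hν : ∀ x ∈ S, 0 < ν x)
    (Δ : Finset (Fin N → ℝ)) (hΔS : Δ ⊆ S) (hΔcard : Δ.card = d)
    (hΔindep : AffineIndependent ℝ (fun x : (Δ : Set (Fin N → ℝ)) => (x : Fin N → ℝ)))
    (hΔbd : convexHull ℝ (Δ : Set (Fin N → ℝ)) ⊆ intrinsicFrontier ℝ P) :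
    convexHull ℝ ((Δ : Set (Fin N → ℝ)) ∪ {massCenter ν S}) ∩ intrinsicInterior ℝ P ⊆
      intrinsicInterior ℝ
        (convexHull ℝ ((Δ : Set (Fin N → ℝ)) ∪ {massCenter ν (S \ Δ)})) :=
  statement14_general N S P hP d hd2 ν hν Δ hΔS hΔcard hΔbd
end
end
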